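/- arXiv:1707.08292 — 2 statements merged into one kernel-verified Lean document; each statement's English description precedes it below -/
import Mathlib

section
/- Let A be a finitary hereditary abelian category over a finite field. For objects M, B, A, N of A and a fixed integer n, |{g ∈ Hom_A(B,A) : Ker g ≅ M, Coker g ≅ N}| = |V(M,B,A,N)| / (a_M · a_N), where V(M,B,A,N) is the set of exact sequences 0 → M → B → A → N → 0 and a_X = |Aut(X)|. -/
open CategoryTheory CategoryTheory.Limits ZeroObject

universe w w' v u

variable {A : Type u} [Category.{v} A] [Abelian A]

/-- The acyclic complex `K_{X,m}`: `X` in degrees `m-1` and `m`, identity differential. -/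
noncomputable def Kc (X : A) (m : ℤ) : CochainComplex A ℤ where
  X i := if i = m - 1 ∨ i = m then X else 0
  d i j := if h : i = m - 1 ∧ j = m then
      eqToHom (by rw [if_pos (Or.inl h.1), if_pos (Or.inr h.2)]) else 0
  shape i j hij := by
    try dsimp only
    rw [dif_neg]
    rintro ⟨rfl, rfl⟩
    exact hij (by simp [ComplexShape.up_Rel])
  d_comp_d' i j k _ _ := by
    try dsimp only
    by_cases h1 : i = m - 1 ∧ j = m
    · obtain ⟨hi, hj⟩ := h1
      rw [dif_pos ⟨hi, hj⟩, dif_neg (fun h2 => by obtain ⟨h2a, h2b⟩ := h2; omega)]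
      exact comp_zero
    · rw [dif_neg h1, zero_comp]

/-- The stalk complex `U_{X,n}` with `X` concentrated in degree `n`. -/
noncomputable def Uc (X : A) (n : ℤ) : CochainComplex A ℤ :=
  (HomologicalComplex.single A (ComplexShape.up ℤ) n).obj X

/-- A complex is bounded. -/
def Bdd (M : CochainComplex A ℤ) : Prop :=
  ∃ a b : ℤ, ∀ i : ℤ, i < a ∨ b < i → IsZero (M.X i)

/-- A complex is acyclic if it is exact everywhere. -/
def Acyc (K : CochainComplex A ℤ) : Prop := ∀ i : ℤ, K.ExactAt i

section Counting

variable (C : Type w) [Category.{w'} C] [Abelian C]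

variable {C} in
/-- An extension of `L` by `M`: a short exact sequence `0 → M → E → L → 0`. -/
structure Extn (M L : C) where
  E : C
  ι : M ⟶ E
  π : E ⟶ L
  w : ι ≫ π = 0
  shortExact : (ShortComplex.mk ι π w).ShortExact

variable {C} in
/-- Equivalence of extensions (isomorphism of the middle terms compatible with the maps). -/
def ExtnEquiv {M L : C} (e e' : Extn M L) : Prop :=
  ∃ φ : e.E ≅ e'.E, e.ι ≫ φ.hom = e'.ι ∧ φ.hom ≫ e'.π = e.π

variable {C} in
/-- `|Ext¹(L, M)|`: the number of equivalence classes of extensions of `L` by `M`. -/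
noncomputable def ext1Card (L M : C) : ℕ :=
  Nat.card (Quot (ExtnEquiv (M := M) (L := L)))

variable {C} in
/-- `|Ext¹(L, M)_X|`: the number of equivalence classes of extensions of `L` by `M`
whose middle term is isomorphic to `X`. -/
noncomputable def extCardWith (L M X : C) : ℕ :=
  Nat.card (Quot (fun e e' : {e : Extn M L // Nonempty (e.E ≅ X)} => ExtnEquiv e.1 e'.1))

variable {C} in
/-- `|Hom(X, Y)|`. -/
noncomputable def homCard (X Y : C) : ℕ := Nat.card (X ⟶ Y)

variable {C} in
/-- `a_X = |Aut X|`. -/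
noncomputable def autCard (X : C) : ℕ := Nat.card (Aut X)

/-- The set of isomorphism classes of objects of `C`. -/
abbrev IsoCls : Type _ := Quotient (CategoryTheory.isIsomorphicSetoid C)

variable {C} in
/-- The Hall number `g^X_{AB}`: the number of subobjects of `X` isomorphic to `B`
with quotient isomorphic to `A`. -/
noncomputable def hallNum (X A B : C) : ℕ :=
  Nat.card {S : Subobject X // Nonempty ((S : C) ≅ B) ∧ Nonempty (cokernel S.arrow ≅ A)}

variable {C} in
/-- `V(M, B, A, N)`: the set of exact sequences `0 → M → B → A → N → 0`. -/
def Vset (M B A N : C) : Type _ :=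
  {t : (M ⟶ B) × (B ⟶ A) × (A ⟶ N) //
    Mono t.1 ∧ Epi t.2.2 ∧
    ∃ w1 : t.1 ≫ t.2.1 = 0, (ShortComplex.mk t.1 t.2.1 w1).Exact ∧
    ∃ w2 : t.2.1 ≫ t.2.2 = 0, (ShortComplex.mk t.2.1 t.2.2 w2).Exact}

variable {C} in
/-- `γ^{MN}_{AB} = |V(M,B,A,N)| / (a_A a_B)`. -/
noncomputable def gammaC (X Y M N : C) : ℚ :=
  (Nat.card (Vset M Y X N) : ℚ) / ((autCard X : ℚ) * (autCard Y : ℚ))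

end Counting

/-!
A sequence `0 → M → Y → X → N → 0` is the same thing as a morphism `g : Y ⟶ X` together with
isomorphisms `M ≅ ker g` and `coker g ≅ N`. For `g` with kernel `≅ M` and cokernel `≅ N`, these
pairs of isomorphisms form an `Aut M × Aut N`-torsor, so every such `g` is the middle map of
exactly `a_M · a_N` elements of `V(M, Y, X, N)`.
-/

namespace CategoryTheory

section FiniteHom

variable {C : Type*} [Category C] [∀ X Y : C, Finite (X ⟶ Y)]

instance Iso.finite (X Y : C) : Finite (X ≅ Y) :=
  Finite.of_injective Iso.hom fun _ _ h => Iso.ext h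

instance Aut.finite (X : C) : Finite (Aut X) :=
  inferInstanceAs (Finite (X ≅ X))

end FiniteHom

namespace ShortComplex.Exact

variable {C : Type*} [Category C] [Preadditive C] [Balanced C] {S : ShortComplex C}

noncomputable def isoKernel (hS : S.Exact) [Mono S.f] [HasKernel S.g] : S.X₁ ≅ kernel S.g :=
  IsLimit.conePointUniqueUpToIso hS.fIsKernel (limit.isLimit _)

@[simp]
lemma isoKernel_hom_comp_ι (hS : S.Exact) [Mono S.f] [HasKernel S.g] :
    hS.isoKernel.hom ≫ kernel.ι S.g = S.f :=
  IsLimit.conePointUniqueUpToIso_hom_comp _ _ WalkingParallelPair.zero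

noncomputable def cokernelIso (hS : S.Exact) [Epi S.g] [HasCokernel S.f] :
    cokernel S.f ≅ S.X₃ :=
  IsColimit.coconePointUniqueUpToIso (colimit.isColimit _) hS.gIsCokernel

@[simp]
lemma π_comp_cokernelIso_hom (hS : S.Exact) [Epi S.g] [HasCokernel S.f] :
    cokernel.π S.f ≫ hS.cokernelIso.hom = S.g :=
  IsColimit.comp_coconePointUniqueUpToIso_hom _ _ WalkingParallelPair.one

end ShortComplex.Exact

end CategoryTheory

lemma autCard_pos {C : Type*} [Category C] [∀ X Y : C, Finite (X ⟶ Y)] (X : C) :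
    0 < autCard X :=
  Nat.card_pos

section Counting

variable {C : Type*} [Category C] [Abelian C]

variable (M X Y N : C)

noncomputable def Vset.ofIsos
    (x : Σ g : {g : Y ⟶ X // Nonempty (kernel g ≅ M) ∧ Nonempty (cokernel g ≅ N)},
      (M ≅ kernel g.1) × (cokernel g.1 ≅ N)) : Vset M Y X N :=
  ⟨(x.2.1.hom ≫ kernel.ι x.1.1, x.1.1, cokernel.π x.1.1 ≫ x.2.2.hom),
    mono_comp _ _, epi_comp _ _, by simp,
    ShortComplex.exact_of_f_is_kernel _
      (IsLimit.ofIsoLimit (kernelIsKernel _) (Fork.ext x.2.1.symm (by simp))),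
    by simp,
    ShortComplex.exact_of_g_is_cokernel _
      (IsColimit.ofIsoColimit (cokernelIsCokernel _) (Cofork.ext x.2.2 (by simp)))⟩

lemma Vset.ofIsos_bijective : Function.Bijective (Vset.ofIsos M X Y N) := by
  constructor
  · rintro ⟨⟨g, _⟩, e, q⟩ ⟨⟨g', _⟩, e', q'⟩ h
    obtain ⟨he, rfl, hq⟩ : e.hom ≫ kernel.ι g = e'.hom ≫ kernel.ι g' ∧ g = g' ∧
        cokernel.π g ≫ q.hom = cokernel.π g' ≫ q'.hom := by
      simpa [Vset.ofIsos, Prod.ext_iff] using congrArg Subtype.val h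
    obtain rfl : e = e' := Iso.ext ((cancel_mono _).1 he)
    obtain rfl : q = q' := Iso.ext ((cancel_epi _).1 hq)
    rfl
  · rintro ⟨⟨f, g, h⟩, _, _, _, hex₁, _, hex₂⟩
    refine ⟨⟨⟨g, ⟨hex₁.isoKernel.symm⟩, ⟨hex₂.cokernelIso⟩⟩,
      (hex₁.isoKernel, hex₂.cokernelIso)⟩, Subtype.ext ?_⟩
    simp only [Vset.ofIsos, hex₁.isoKernel_hom_comp_ι, hex₂.π_comp_cokernelIso_hom]

lemma natCard_vset :
    Nat.card (Vset M Y X N) =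
      Nat.card {g : Y ⟶ X // Nonempty (kernel g ≅ M) ∧ Nonempty (cokernel g ≅ N)} *
        (autCard M * autCard N) := by
  let e := (Equiv.ofBijective _ (Vset.ofIsos_bijective M X Y N)).symm.trans <|
    (Equiv.sigmaCongrRight fun g =>
      (Iso.isoCongrRight g.2.1.some).prodCongr (Iso.isoCongrLeft g.2.2.some)).trans <|
    Equiv.sigmaEquivProd _ (Aut M × Aut N)
  rw [Nat.card_congr e, Nat.card_prod, Nat.card_prod, autCard, autCard]

end Counting

theorem stmt13 (k : Type) [Field k] [Finite k] [CategoryTheory.Linear k A]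
    [∀ X Y : A, Finite (X ⟶ Y)]
    (hfinext : ∀ X Y : A, Finite (Quot (ExtnEquiv (M := Y) (L := X))))
    [HasExt.{w} A]
    (hered : ∀ (X Y : A) (n : ℕ), 2 ≤ n → Subsingleton (Abelian.Ext X Y n))
    (M X Y N : A) (n : ℤ) :
    (Nat.card {g : Y ⟶ X // Nonempty (kernel g ≅ M) ∧ Nonempty (cokernel g ≅ N)} : ℚ) =
      (Nat.card (Vset M Y X N) : ℚ) / ((autCard M : ℚ) * (autCard N : ℚ)) := by
  have hM : (autCard M : ℚ) ≠ 0 := Nat.cast_ne_zero.2 (autCard_pos M).ne'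
  have hN : (autCard N : ℚ) ≠ 0 := Nat.cast_ne_zero.2 (autCard_pos N).ne'
  rw [natCard_vset, Nat.cast_mul, Nat.cast_mul, mul_div_cancel_right₀ _ (mul_ne_zero hM hN)]
end

section
/- Let A be a finitary hereditary abelian category over a finite field. In the quotient (H(C^b(A))/I) of the Ringel-Hall algebra of bounded complexes, for any bounded acyclic complex K and any bounded complex M: [M] ⋄ [K] = ⟨[M],[K]⟩^{-1} [M ⊕ K]. In particular, for acyclic K₁, K₂: [K₁] ⋄ [K₂] = ⟨[K₁],[K₂]⟩^{-1} [K₁ ⊕ K₂]. -/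
/-! By the Hall product, `[M] ⋄ [K]` is a sum over the extensions `0 → K → X → M → 0`, each
weighted by `|Hom(M, K)|⁻¹`. When `K` is acyclic every such `X` has class `[M ⊕ K]` modulo `I`,
so the sum collapses to `|Ext¹(M, K)| / |Hom(M, K)| · [M ⊕ K]`. The count is finite because an
extension of bounded complexes is determined, up to equivalence, by its finitely many degreewise
extension classes together with the maps `ι`, `π`, `d` transported to fixed representatives of
the degreewise middle terms. -/
open CategoryTheory CategoryTheory.Limits ZeroObject

universe w w' v u

variable {A : Type u} [Category.{v} A] [Abelian A]

variable (A) in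
/-- The data of a `ℚ`-algebra together with a class map from bounded complexes
satisfying the defining relations of the quotient `H(C^b(A))/I` of the Ringel–Hall
algebra of bounded complexes: the Hall multiplication rule and the relations
`[L] = [K ⊕ M]` for short exact sequences `K ↪ L ↠ M` with `K` acyclic.  Since the
quotient is the universal such datum, an identity holds in `H(C^b(A))/I` if and only
if it holds in every such datum. -/
structure HallQuotData where
  R : Type*
  [ringR : Ring R]
  [algR : Algebra ℚ R]
  cls : CochainComplex A ℤ → R
  cls_iso : ∀ {L M : CochainComplex A ℤ}, (L ≅ M) → cls L = cls M
  hall_mul : ∀ L M : CochainComplex A ℤ, Bdd L → Bdd M →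
    cls L * cls M =
      ∑ᶠ x : IsoCls (CochainComplex A ℤ),
        ((extCardWith L M x.out : ℚ) / (homCard L M : ℚ)) • cls x.out
  ideal_rel : ∀ S : ShortComplex (CochainComplex A ℤ), S.ShortExact →
    Bdd S.X₁ → Bdd S.X₂ → Bdd S.X₃ → Acyc S.X₁ → cls S.X₂ = cls (S.X₁ ⊞ S.X₃)

attribute [instance] HallQuotData.ringR HallQuotData.algR


section Extensions

variable {C : Type w} [Category.{w'} C] [Abelian C]

theorem ExtnEquiv.equivalence (L M : C) : Equivalence (ExtnEquiv (M := M) (L := L)) where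
  refl _ := ⟨Iso.refl _, by simp, by simp⟩
  symm := by
    rintro e e' ⟨φ, hι, hπ⟩
    exact ⟨φ.symm, by simp [← hι], by simp [← hπ]⟩
  trans := by
    rintro e e' e'' ⟨φ, hι, hπ⟩ ⟨φ', hι', hπ'⟩
    exact ⟨φ ≪≫ φ', by simp [← hι', ← hι], by simp [hπ', hπ]⟩

noncomputable def isoOutMk (X : C) : X ≅ (Quotient.mk (isIsomorphicSetoid C) X).out :=
  (Classical.choice (Quotient.mk_out (s := isIsomorphicSetoid C) X)).symm

noncomputable def Extn.midClass {L M : C} : Quot (ExtnEquiv (M := M) (L := L)) → IsoCls C :=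
  Quot.lift (fun e => Quotient.mk (isIsomorphicSetoid C) e.E)
    fun _ _ h => Quotient.sound ⟨h.choose⟩

theorem extCardWith_eq_card_midClass_fiber (L M : C) (x : IsoCls C) :
    extCardWith L M x.out =
      Nat.card {t : Quot (ExtnEquiv (M := M) (L := L)) // Extn.midClass t = x} := by
  refine Nat.card_congr (Equiv.ofBijective
    (Quot.lift (fun e => ⟨Quot.mk _ e.1, (Quotient.sound e.2).trans x.out_eq⟩)
      fun _ _ h => Subtype.ext (Quot.sound h)) ⟨?_, ?_⟩)
  · rintro ⟨e⟩ ⟨e'⟩ h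
    exact Quot.sound ((ExtnEquiv.equivalence L M).eqvGen_iff.mp
      (Quot.eq.mp (congrArg Subtype.val h)))
  · rintro ⟨⟨e⟩, rfl⟩
    exact ⟨Quot.mk _ ⟨e, ⟨isoOutMk e.E⟩⟩, rfl⟩

theorem finsum_natCard_fiber {α β : Type*} [Finite α] (f : α → β) :
    ∑ᶠ b, (Nat.card {a // f a = b} : ℚ) = Nat.card α := by
  classical
  cases nonempty_fintype α
  rw [finsum_eq_sum_of_support_subset (s := Finset.univ.image f)]
  · simp_rw [Nat.card_eq_fintype_card, Fintype.card_subtype]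
    rw [← Nat.cast_sum, ← Finset.card_eq_sum_card_image, Finset.card_univ]
  · intro b hb
    obtain ⟨⟨a, rfl⟩⟩ : Nonempty {a // f a = b} := by
      by_contra h
      simp [not_nonempty_iff.mp h] at hb
    simp

theorem finsum_extCardWith (L M : C) [Finite (Quot (ExtnEquiv (M := M) (L := L)))] :
    ∑ᶠ x : IsoCls C, (extCardWith L M x.out : ℚ) = ext1Card L M := by
  simp_rw [extCardWith_eq_card_midClass_fiber]
  exact finsum_natCard_fiber _

end Extensions

section Complexes

variable {K M : CochainComplex A ℤ}

def SupportedIn (M : CochainComplex A ℤ) (W : Finset ℤ) : Prop := ∀ i ∉ W, IsZero (M.X i)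

theorem Bdd.exists_supportedIn_Icc (hK : Bdd K) (hM : Bdd M) :
    ∃ a b, SupportedIn K (Finset.Icc a b) ∧ SupportedIn M (Finset.Icc a b) := by
  obtain ⟨a₁, b₁, hK⟩ := hK
  obtain ⟨a₂, b₂, hM⟩ := hM
  refine ⟨min a₁ a₂, max b₁ b₂, fun i hi => hK i ?_, fun i hi => hM i ?_⟩ <;>
    · simp only [Finset.mem_Icc, not_and_or, not_le] at hi
      omega

noncomputable def Extn.eval (e : Extn K M) (i : ℤ) : Extn (K.X i) (M.X i) where
  E := e.E.X i
  ι := e.ι.f i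
  π := e.π.f i
  w := by rw [← HomologicalComplex.comp_f, e.w, HomologicalComplex.zero_f]
  shortExact := (e.shortExact.map_of_exact (HomologicalComplex.eval A (ComplexShape.up ℤ) i) :)

theorem Extn.supportedIn {W : Finset ℤ} (e : Extn K M) (hK : SupportedIn K W)
    (hM : SupportedIn M W) : SupportedIn e.E W := fun i hi =>
  (e.eval i).shortExact.exact.isZero_X₂ ((hK i hi).eq_of_src _ _) ((hM i hi).eq_of_tgt _ _)

theorem Extn.bdd (e : Extn K M) (hK : Bdd K) (hM : Bdd M) : Bdd e.E := by
  obtain ⟨a, b, hKab, hMab⟩ := hK.exists_supportedIn_Icc hM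
  refine ⟨a, b, fun i hi => e.supportedIn hKab hMab i ?_⟩
  simp only [Finset.mem_Icc]
  omega

end Complexes

section Transport

variable {W : Finset ℤ} {R : W → A}

theorem exists_iso_of_transport {X Y : CochainComplex A ℤ} (hX : SupportedIn X W)
    (hY : SupportedIn Y W) (Ψ : ∀ i : W, X.X i ≅ R i) (Ψ' : ∀ i : W, Y.X i ≅ R i)
    (hd : ∀ i j : W, (Ψ i).inv ≫ X.d i j ≫ (Ψ j).hom = (Ψ' i).inv ≫ Y.d i j ≫ (Ψ' j).hom) :
    ∃ φ : X ≅ Y, ∀ i : W, φ.hom.f i = (Ψ i).hom ≫ (Ψ' i).inv := by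
  classical
  let φ : ∀ i, X.X i ≅ Y.X i := fun i =>
    if hi : i ∈ W then Ψ ⟨i, hi⟩ ≪≫ (Ψ' ⟨i, hi⟩).symm else (hX i hi).iso (hY i hi)
  have hφ : ∀ i : W, (φ i).hom = (Ψ i).hom ≫ (Ψ' i).inv := fun i => by simp [φ]
  refine ⟨HomologicalComplex.Hom.isoOfComponents φ fun i j _ => ?_, fun i => hφ i⟩
  by_cases hj : j ∈ W
  · by_cases hi : i ∈ W
    · rw [hφ ⟨i, hi⟩, hφ ⟨j, hj⟩, Category.assoc, ← Iso.eq_inv_comp,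
        reassoc_of% hd ⟨i, hi⟩ ⟨j, hj⟩, Iso.hom_inv_id, Category.comp_id]
    · exact (hX i hi).eq_of_src _ _
  · exact (hY j hj).eq_of_tgt _ _

variable {K M : CochainComplex A ℤ}

abbrev ExtnData (K M : CochainComplex A ℤ) (R : W → A) : Type _ :=
  ((i : W) → K.X i ⟶ R i) × ((i : W) → R i ⟶ M.X i) × ((i j : W) → R i ⟶ R j)

def Extn.transport (e : Extn K M) (Ψ : ∀ i : W, e.E.X i ≅ R i) : ExtnData K M R :=
  (fun i => e.ι.f i ≫ (Ψ i).hom, fun i => (Ψ i).inv ≫ e.π.f i,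
    fun i j => (Ψ i).inv ≫ e.E.d i j ≫ (Ψ j).hom)

theorem Extn.equiv_of_transport_eq {e e' : Extn K M} (hK : SupportedIn K W)
    (hM : SupportedIn M W) (Ψ : ∀ i : W, e.E.X i ≅ R i) (Ψ' : ∀ i : W, e'.E.X i ≅ R i)
    (h : e.transport Ψ = e'.transport Ψ') : ExtnEquiv e e' := by
  simp only [Extn.transport, Prod.mk.injEq, funext_iff] at h
  obtain ⟨hι, hπ, hd⟩ := h
  obtain ⟨φ, hφ⟩ := exists_iso_of_transport (e.supportedIn hK hM) (e'.supportedIn hK hM) Ψ Ψ' hd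
  refine ⟨φ, HomologicalComplex.hom_ext _ _ fun i => ?_, HomologicalComplex.hom_ext _ _ fun i => ?_⟩
  all_goals
    rw [HomologicalComplex.comp_f]
    by_cases hi : i ∈ W
  · rw [hφ ⟨i, hi⟩, ← Category.assoc, hι ⟨i, hi⟩, Category.assoc, Iso.hom_inv_id,
      Category.comp_id]
  · exact (hK i hi).eq_of_src _ _
  · rw [hφ ⟨i, hi⟩, Category.assoc, ← hπ ⟨i, hi⟩, Iso.hom_inv_id_assoc]
  · exact (e.supportedIn hK hM i hi).eq_of_src _ _

end Transport

theorem finite_quot_of_eq_imp_rel {α β : Type*} [Finite β] {r : α → α → Prop} (f : α → β)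
    (hf : ∀ a b, f a = f b → r a b) : Finite (Quot r) :=
  Finite.of_injective (fun t => f t.out) fun t t' h => by
    rw [← t.out_eq, ← t'.out_eq]
    exact Quot.sound (hf _ _ h)

theorem finite_extnEquiv_quot_of_supportedIn [∀ X Y : A, Finite (X ⟶ Y)]
    (hfinext : ∀ X Y : A, Finite (Quot (ExtnEquiv (M := Y) (L := X))))
    {K M : CochainComplex A ℤ} {W : Finset ℤ} (hK : SupportedIn K W) (hM : SupportedIn M W) :
    Finite (Quot (ExtnEquiv (M := K) (L := M))) := by
  let Classes := (i : W) → Quot (ExtnEquiv (M := K.X i) (L := M.X i))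
  let code : Extn K M → Σ V : Classes, ExtnData K M fun i => (Extn.midClass (V i)).out :=
    fun e => ⟨fun i => Quot.mk _ (e.eval i), e.transport fun i => isoOutMk (e.E.X i)⟩
  -- stated for arbitrary `V`, `V'` so that the equality of first components can be substituted
  have hcode : ∀ (e e' : Extn K M) (V V' : Classes)
      (Ψ : ∀ i : W, e.E.X i ≅ (Extn.midClass (V i)).out)
      (Ψ' : ∀ i : W, e'.E.X i ≅ (Extn.midClass (V' i)).out),
      (⟨V, e.transport Ψ⟩ : Σ V : Classes, ExtnData K M fun i => (Extn.midClass (V i)).out) =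
        ⟨V', e'.transport Ψ'⟩ → ExtnEquiv e e' := by
    rintro e e' V V' Ψ Ψ' h
    obtain ⟨rfl, h⟩ := Sigma.mk.inj_iff.mp h
    exact Extn.equiv_of_transport_eq hK hM Ψ Ψ' (eq_of_heq h)
  exact finite_quot_of_eq_imp_rel code fun e e' => hcode e e' _ _ _ _

namespace HallQuotData

variable (H : HallQuotData A) {K M : CochainComplex A ℤ}

theorem cls_extn (e : Extn K M) (hK : Bdd K) (hM : Bdd M) (hKac : Acyc K) :
    H.cls e.E = H.cls (M ⊞ K) :=
  (H.ideal_rel _ e.shortExact hK (e.bdd hK hM) hM hKac).trans (H.cls_iso (biprod.braiding K M))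

theorem cls_mul_cls_of_acyc [∀ X Y : A, Finite (X ⟶ Y)]
    (hfinext : ∀ X Y : A, Finite (Quot (ExtnEquiv (M := Y) (L := X))))
    (hM : Bdd M) (hK : Bdd K) (hKac : Acyc K) :
    H.cls M * H.cls K = ((homCard M K : ℚ) / (ext1Card M K : ℚ))⁻¹ • H.cls (M ⊞ K) := by
  have hterm : ∀ x : IsoCls (CochainComplex A ℤ),
      ((extCardWith M K x.out : ℚ) / homCard M K) • H.cls x.out =
        (extCardWith M K x.out : ℚ) • ((homCard M K : ℚ)⁻¹ • H.cls (M ⊞ K)) := by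
    intro x
    rcases eq_or_ne (extCardWith M K x.out) 0 with h | h
    · simp [h]
    · obtain ⟨⟨⟨e, ⟨φ⟩⟩⟩, -⟩ := Nat.card_ne_zero.mp h
      rw [← H.cls_iso φ, H.cls_extn e hK hM hKac, div_eq_mul_inv, mul_smul]
  -- `∑ᶠ` is `0` on an infinite support, so the extension classes must be finite in number
  obtain ⟨a, b, hKab, hMab⟩ := hK.exists_supportedIn_Icc hM
  have := finite_extnEquiv_quot_of_supportedIn hfinext hKab hMab
  rw [H.hall_mul M K hM hK, finsum_congr hterm, ← finsum_smul, finsum_extCardWith, smul_smul,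
    inv_div, div_eq_mul_inv]

end HallQuotData

theorem stmt17 (k : Type) [Field k] [Finite k] [CategoryTheory.Linear k A]
    [∀ X Y : A, Finite (X ⟶ Y)]
    (hfinext : ∀ X Y : A, Finite (Quot (ExtnEquiv (M := Y) (L := X))))
    [HasExt.{w} A]
    (hered : ∀ (X Y : A) (n : ℕ), 2 ≤ n → Subsingleton (Abelian.Ext X Y n))
    (H : HallQuotData A) :
    (∀ M K : CochainComplex A ℤ, Bdd M → Bdd K → Acyc K →
      H.cls M * H.cls K =
        ((homCard M K : ℚ) / (ext1Card M K : ℚ))⁻¹ • H.cls (M ⊞ K)) ∧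
    (∀ K₁ K₂ : CochainComplex A ℤ, Bdd K₁ → Bdd K₂ → Acyc K₁ → Acyc K₂ →
      H.cls K₁ * H.cls K₂ =
        ((homCard K₁ K₂ : ℚ) / (ext1Card K₁ K₂ : ℚ))⁻¹ • H.cls (K₁ ⊞ K₂)) :=
  ⟨fun _ _ hM hK hKac => H.cls_mul_cls_of_acyc hfinext hM hK hKac,
    fun _ _ h₁ h₂ _ hac₂ => H.cls_mul_cls_of_acyc hfinext h₁ h₂ hac₂⟩
end
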